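/- Every derivation D of g(γ,Q) can be written as D = ad x + Σ_{i=1}^d c_i ∂_i for some element x∈g and complex scalars c_1,…,c_d, where ∂_i is the derivation defined by ∂_i(L_m)=m_i L_m; equivalently, Der(g) is spanned by the inner derivations together with ∂_1,…,∂_d, and ad L_0 = γ_1∂_1+⋯+γ_d∂_d. -/

import Mathlib

open scoped BigOperators

namespace QTorus

/-- σ(m,n) = ∏_{i<j} q_{ji}^{m_j n_i}. -/
noncomputable def qsigma (d : ℕ) (Q : Matrix (Fin d) (Fin d) ℂ) (m n : Fin d → ℤ) : ℂ :=
  ∏ i : Fin d, ∏ j : Fin d, if i < j then Q j i ^ (m j * n i) else 1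

/-- The radical subgroup R = {m | σ(m,n)=σ(n,m) for all n}. -/
def Rset (d : ℕ) (Q : Matrix (Fin d) (Fin d) ℂ) : Set (Fin d → ℤ) :=
  {m | ∀ n : Fin d → ℤ, qsigma d Q m n = qsigma d Q n m}

/-- (γ|m) = ∑ γ_i m_i. -/
noncomputable def ip (d : ℕ) (γ : Fin d → ℂ) (m : Fin d → ℤ) : ℂ :=
  ∑ i : Fin d, γ i * (m i : ℂ)

/-- The underlying vector space of g(γ,Q): formal ℂ-linear combinations of basis
vectors indexed by ℤ^d. -/
abbrev g (d : ℕ) := (Fin d → ℤ) →₀ ℂ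

/-- The basis vector L_m. -/
noncomputable def L (d : ℕ) (m : Fin d → ℤ) : g d := Finsupp.single m 1

/-- Hypotheses on the matrix Q: nonzero entries, q_{ii}=1, q_{ij}q_{ji}=1. -/
def QOk (d : ℕ) (Q : Matrix (Fin d) (Fin d) ℂ) : Prop :=
  (∀ i, Q i i = 1) ∧ (∀ i j, Q i j * Q j i = 1) ∧ (∀ i j, Q i j ≠ 0)

/-- γ is generic: γ_1,…,γ_d are linearly independent over ℚ. -/
def Generic (d : ℕ) (γ : Fin d → ℂ) : Prop := LinearIndependent ℚ γ

open Classical in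
/-- Structure constants of g(γ,Q): [L_m, L_n] = sc(m,n) • L_{m+n}. -/
noncomputable def sc (d : ℕ) (Q : Matrix (Fin d) (Fin d) ℂ) (γ : Fin d → ℂ)
    (m n : Fin d → ℤ) : ℂ :=
  if m ∈ Rset d Q then
    (if n ∈ Rset d Q then qsigma d Q m n * ip d γ (n - m)
     else qsigma d Q m n * ip d γ n)
  else
    (if n ∈ Rset d Q then -(qsigma d Q n m * ip d γ m)
     else qsigma d Q m n - qsigma d Q n m)

/-- The bracket of g(γ,Q), as the bilinear extension of
[L_m, L_n] = sc(m,n) • L_{m+n}. -/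
noncomputable def br (d : ℕ) (Q : Matrix (Fin d) (Fin d) ℂ) (γ : Fin d → ℂ)
    (x y : g d) : g d :=
  x.sum fun m a => y.sum fun n b => Finsupp.single (m + n) (a * b * sc d Q γ m n)

/-- A Lie algebra automorphism of g(γ,Q): a linear equivalence preserving the bracket. -/
def IsAut (d : ℕ) (Q : Matrix (Fin d) (Fin d) ℂ) (γ : Fin d → ℂ)
    (θ : g d ≃ₗ[ℂ] g d) : Prop :=
  ∀ x y : g d, θ (br d Q γ x y) = br d Q γ (θ x) (θ y)

/-- A derivation of g(γ,Q). -/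
def IsDer (d : ℕ) (Q : Matrix (Fin d) (Fin d) ℂ) (γ : Fin d → ℂ)
    (D : g d →ₗ[ℂ] g d) : Prop :=
  ∀ x y : g d, D (br d Q γ x y) = br d Q γ (D x) y + br d Q γ x (D y)

open Classical in
/-- δ(n,R) = 1 if n ∈ R, 0 otherwise. -/
noncomputable def deltaR (d : ℕ) (Q : Matrix (Fin d) (Fin d) ℂ) (n : Fin d → ℤ) : ℕ :=
  if n ∈ Rset d Q then 1 else 0

/-- A 2-cocycle on g(γ,Q). -/
def IsCocycle (d : ℕ) (Q : Matrix (Fin d) (Fin d) ℂ) (γ : Fin d → ℂ)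
    (α : g d →ₗ[ℂ] g d →ₗ[ℂ] ℂ) : Prop :=
  (∀ x y : g d, α x y = - α y x) ∧
  (∀ x y z : g d,
    α (br d Q γ x y) z + α (br d Q γ z x) y + α (br d Q γ y z) x = 0)

/-- i ↔ j is one of the exceptional index pairs (2l-1,2l) (1-based) of the rational
normal form. Here indices are 0-based. -/
def OffDiagPair (z : ℕ) (i j : ℕ) : Prop :=
  ∃ l : ℕ, l < z ∧ ((i = 2 * l ∧ j = 2 * l + 1) ∨ (i = 2 * l + 1 ∧ j = 2 * l))

/-- Q is in rational normal form with parameters z and k_1,…,k_d (0-based indexing: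
the paper's pair (2i-1,2i) is the Lean pair (2l, 2l+1) with l = i-1). -/
def IsRNF (d : ℕ) (Q : Matrix (Fin d) (Fin d) ℂ) (z : ℕ) (k : Fin d → ℕ) : Prop :=
  0 < z ∧ 2 * z ≤ d ∧
  (∀ i j : Fin d, ¬ OffDiagPair z i.val j.val → Q i j = 1) ∧
  (∀ (l : ℕ) (_ : l < z) (hi : 2 * l < d) (hj : 2 * l + 1 < d),
      IsPrimitiveRoot (Q ⟨2 * l, hi⟩ ⟨2 * l + 1, hj⟩) (k ⟨2 * l, hi⟩) ∧
      Q ⟨2 * l + 1, hj⟩ ⟨2 * l, hi⟩ = (Q ⟨2 * l, hi⟩ ⟨2 * l + 1, hj⟩)⁻¹ ∧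
      k ⟨2 * l + 1, hj⟩ = k ⟨2 * l, hi⟩ ∧
      1 < k ⟨2 * l, hi⟩) ∧
  (∀ (i : ℕ) (_ : i + 1 < 2 * z) (h1 : i < d) (h2 : i + 1 < d),
      k ⟨i + 1, h2⟩ ∣ k ⟨i, h1⟩) ∧
  (∀ i : Fin d, 2 * z ≤ i.val → k i = 1)

/-- The vector k_1 e_1 ∈ ℤ^d. -/
noncomputable def k1e1 (d : ℕ) (k : Fin d → ℕ) (hd : 0 < d) : Fin d → ℤ :=
  Pi.single ⟨0, hd⟩ (k ⟨0, hd⟩ : ℤ)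

/-- A 2-cocycle is normalized if α(L_{m-k₁e₁}, L_{k₁e₁})=0 for m ∈ R, m ≠ 2k₁e₁,
α(L_0, L_{2k₁e₁})=0, α(L_0, L_s)=0 for s ∉ R, and α(L_m,L_n)=0 whenever m+n ≠ 0. -/
def IsNormalized (d : ℕ) (Q : Matrix (Fin d) (Fin d) ℂ) (k : Fin d → ℕ) (hd : 0 < d)
    (α : g d →ₗ[ℂ] g d →ₗ[ℂ] ℂ) : Prop :=
  (∀ m ∈ Rset d Q, m ≠ 2 • k1e1 d k hd →
      α (L d (m - k1e1 d k hd)) (L d (k1e1 d k hd)) = 0) ∧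
  α (L d 0) (L d (2 • k1e1 d k hd)) = 0 ∧
  (∀ s, s ∉ Rset d Q → α (L d 0) (L d s) = 0) ∧
  (∀ m n : Fin d → ℤ, m + n ≠ 0 → α (L d m) (L d n) = 0)

/-- The degree derivation ∂_i, acting by ∂_i(L_m) = m_i L_m. -/
noncomputable def deg (d : ℕ) (i : Fin d) (y : g d) : g d :=
  y.sum fun m a => Finsupp.single m ((m i : ℂ) * a)

open Classical in
/-- The 2-cocycle α₁: α₁(L_m,L_n) = δ_{m+n,0}((m_γ)³-m_γ)/12 for m ∈ R, 0 otherwise,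
where m_γ = (γ|m)/(γ|k₁e₁). -/
noncomputable def alpha1 (d : ℕ) (Q : Matrix (Fin d) (Fin d) ℂ) (γ : Fin d → ℂ)
    (k : Fin d → ℕ) (hd : 0 < d) (x y : g d) : ℂ :=
  x.sum fun m a => y.sum fun n b => a * b *
    (if m ∈ Rset d Q ∧ m + n = 0 then
       ((ip d γ m / ip d γ (k1e1 d k hd)) ^ 3 - ip d γ m / ip d γ (k1e1 d k hd)) / 12
     else 0)

open Classical in
/-- The 2-cocycle α₂: α₂(L_r,L_s) = δ_{r+s,0} σ(r,-r)(γ|r)/(γ|k₁e₁) for r ∉ R,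
0 otherwise. -/
noncomputable def alpha2 (d : ℕ) (Q : Matrix (Fin d) (Fin d) ℂ) (γ : Fin d → ℂ)
    (k : Fin d → ℕ) (hd : 0 < d) (x y : g d) : ℂ :=
  x.sum fun m a => y.sum fun n b => a * b *
    (if m ∉ Rset d Q ∧ m + n = 0 then
       qsigma d Q m (-m) * (ip d γ m / ip d γ (k1e1 d k hd))
     else 0)

end QTorus

/-!
Write `D L_n = ∑_p F(n,p) L_p`. Applying `D` to `[L_0, L_n] = (γ|n) L_n` and using that
`(γ|r) ≠ 0` for `r ≠ 0` shows that off the diagonal `D` agrees with `ad x` for the single element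
`x = -∑_r (γ|r)⁻¹ F(0,r) L_r`, so `D - ad x` is diagonal, `L_n ↦ φ(n) L_n`. Applying `D` to
`[L_m, L_n]` gives `φ(m + n) = φ(m) + φ(n)` whenever `[L_m, L_n] ≠ 0`, i.e. except when `m = n ∈ R`
or when `m, n ∉ R` commute in the quantum torus. The first case follows by comparing multiples of
`m`; the second by passing through a third vector `z` outside the kernels of the characters
`β(m, ·)`, `β(n, ·)`, `β(m + n, ·)` of the commutation factor `β`. Such a `z` fails to exist only when
those kernels cover `ℤ^d`, which forces `2m, 2n ∈ R`, and there additivity follows from the first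
case. Hence `φ` is additive, so `φ(n) = ∑ c_i n_i`.
-/

namespace AddChar

variable {G M : Type*} [AddMonoid G]

theorem exists_apply_ne_one_and_apply_ne_one [Monoid M] {χ ψ : AddChar G M} (hχ : χ ≠ 1)
    (hψ : ψ ≠ 1) : ∃ a, χ a ≠ 1 ∧ ψ a ≠ 1 := by
  obtain ⟨p, hp⟩ := ne_one_iff.1 hχ
  obtain ⟨q, hq⟩ := ne_one_iff.1 hψ
  by_cases hψp : ψ p = 1
  · by_cases hχq : χ q = 1
    · exact ⟨p + q, by rwa [map_add_eq_mul, hχq, mul_one], by rwa [map_add_eq_mul, hψp, one_mul]⟩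
    · exact ⟨q, hχq, hq⟩
  · exact ⟨p, hp, hψp⟩

variable [CommMonoid M] {χ₁ χ₂ χ₃ : AddChar G M}

theorem sq_apply_eq_one_of_cover_of_apply_eq_one (hprod : ∀ a, χ₁ a * χ₂ a * χ₃ a = 1)
    (h₂ : χ₂ ≠ 1) (h₃ : χ₃ ≠ 1) (hcover : ∀ a, χ₁ a = 1 ∨ χ₂ a = 1 ∨ χ₃ a = 1) {w : G}
    (hw : χ₂ w = 1) : χ₁ w ^ 2 = 1 := by
  by_contra hw₁
  have h₁w : χ₁ w ≠ 1 := fun h => hw₁ (by rw [h, one_pow])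
  have h₃w : χ₃ w ≠ 1 := fun h => h₁w (by simpa [hw, h] using hprod w)
  obtain ⟨v, h₂v, h₃v⟩ := exists_apply_ne_one_and_apply_ne_one h₂ h₃
  have h₁v : χ₁ v = 1 := (hcover v).resolve_right (not_or.2 ⟨h₂v, h₃v⟩)
  -- `v` lies only in `ker χ₁`; the cover at `v + w` and `v + w + w` then forces `χ₁ w ^ 2 = 1`
  have h₃vw : χ₃ v * χ₃ w = 1 := by
    simpa only [map_add_eq_mul, h₁v, hw, one_mul, mul_one, h₁w, h₂v, false_or]
      using hcover (v + w)
  rcases hcover (v + w + w) with h | h | h <;>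
    simp only [map_add_eq_mul, h₁v, hw, one_mul, mul_one, h₃vw] at h
  · exact hw₁ (by rw [sq, h])
  · exact h₂v h
  · exact h₃w h

theorem sq_apply_eq_one_of_cover (hprod : ∀ a, χ₁ a * χ₂ a * χ₃ a = 1) (h₂ : χ₂ ≠ 1)
    (h₃ : χ₃ ≠ 1) (hcover : ∀ a, χ₁ a = 1 ∨ χ₂ a = 1 ∨ χ₃ a = 1) (w : G) : χ₁ w ^ 2 = 1 := by
  by_cases hw₂ : χ₂ w = 1
  · exact sq_apply_eq_one_of_cover_of_apply_eq_one hprod h₂ h₃ hcover hw₂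
  rcases hcover w with hw₁ | hw₂' | hw₃
  · rw [hw₁, one_pow]
  · exact absurd hw₂' hw₂
  · exact sq_apply_eq_one_of_cover_of_apply_eq_one (fun a => by rw [mul_right_comm]; exact hprod a)
      h₃ h₂ (fun a => (hcover a).imp_right Or.symm) hw₃

end AddChar

namespace QTorus

variable {d : ℕ} {Q : Matrix (Fin d) (Fin d) ℂ} {γ : Fin d → ℂ}

section Bicharacter

lemma qsigma_zero_left (n : Fin d → ℤ) : qsigma d Q 0 n = 1 := by
  simp [qsigma]

lemma qsigma_zero_right (m : Fin d → ℤ) : qsigma d Q m 0 = 1 := by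
  simp [qsigma]

lemma zero_mem_Rset : (0 : Fin d → ℤ) ∈ Rset d Q := fun n => by
  rw [qsigma_zero_left, qsigma_zero_right]

/-- The commutation factor of the quantum torus: `t^m t^n = commFactor d Q m n • t^n t^m`. -/
noncomputable def commFactor (d : ℕ) (Q : Matrix (Fin d) (Fin d) ℂ) (m n : Fin d → ℤ) : ℂ :=
  qsigma d Q m n / qsigma d Q n m

lemma commFactor_zero_left (n : Fin d → ℤ) : commFactor d Q 0 n = 1 := by
  simp [commFactor, qsigma_zero_left, qsigma_zero_right]

lemma commFactor_zero_right (m : Fin d → ℤ) : commFactor d Q m 0 = 1 := by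
  simp [commFactor, qsigma_zero_left, qsigma_zero_right]

lemma commFactor_swap (m n : Fin d → ℤ) : commFactor d Q n m = (commFactor d Q m n)⁻¹ :=
  (inv_div _ _).symm

variable (hQ : QOk d Q)
include hQ

lemma qsigma_ne_zero (m n : Fin d → ℤ) : qsigma d Q m n ≠ 0 :=
  Finset.prod_ne_zero_iff.2 fun i _ => Finset.prod_ne_zero_iff.2 fun j _ => by
    split_ifs
    exacts [zpow_ne_zero _ (hQ.2.2 j i), one_ne_zero]

lemma qsigma_add_left (m m' n : Fin d → ℤ) :
    qsigma d Q (m + m') n = qsigma d Q m n * qsigma d Q m' n := by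
  simp_rw [qsigma, ← Finset.prod_mul_distrib]
  congr! 2 with i _ j _
  split_ifs <;> simp [add_mul, zpow_add₀ (hQ.2.2 j i)]

lemma qsigma_add_right (m n n' : Fin d → ℤ) :
    qsigma d Q m (n + n') = qsigma d Q m n * qsigma d Q m n' := by
  simp_rw [qsigma, ← Finset.prod_mul_distrib]
  congr! 2 with i _ j _
  split_ifs <;> simp [mul_add, zpow_add₀ (hQ.2.2 j i)]

lemma commFactor_add_left (m m' n : Fin d → ℤ) :
    commFactor d Q (m + m') n = commFactor d Q m n * commFactor d Q m' n := by
  rw [commFactor, qsigma_add_left hQ, qsigma_add_right hQ, commFactor, commFactor,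
    mul_div_mul_comm]

lemma commFactor_add_right (m n n' : Fin d → ℤ) :
    commFactor d Q m (n + n') = commFactor d Q m n * commFactor d Q m n' := by
  rw [commFactor, qsigma_add_left hQ, qsigma_add_right hQ, commFactor, commFactor,
    mul_div_mul_comm]

lemma commFactor_self (m : Fin d → ℤ) : commFactor d Q m m = 1 :=
  div_self (qsigma_ne_zero hQ m m)

lemma commFactor_neg_left (m n : Fin d → ℤ) :
    commFactor d Q (-m) n = (commFactor d Q m n)⁻¹ := by
  refine eq_inv_of_mul_eq_one_left ?_
  rw [← commFactor_add_left hQ, neg_add_cancel, commFactor_zero_left]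

lemma mem_Rset_iff {m : Fin d → ℤ} : m ∈ Rset d Q ↔ ∀ n, commFactor d Q m n = 1 :=
  forall_congr' fun n => (div_eq_one_iff_eq (qsigma_ne_zero hQ n m)).symm

lemma commFactor_eq_one_of_mem_right {n : Fin d → ℤ} (hn : n ∈ Rset d Q) (m : Fin d → ℤ) :
    commFactor d Q m n = 1 := by
  rw [commFactor_swap, (mem_Rset_iff hQ).1 hn m, inv_one]

def radical : AddSubgroup (Fin d → ℤ) where
  carrier := Rset d Q
  add_mem' {m m'} hm hm' := (mem_Rset_iff hQ).2 fun n => by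
    rw [commFactor_add_left hQ, (mem_Rset_iff hQ).1 hm, (mem_Rset_iff hQ).1 hm', one_mul]
  zero_mem' := zero_mem_Rset
  neg_mem' {m} hm := (mem_Rset_iff hQ).2 fun n => by
    rw [commFactor_neg_left hQ, (mem_Rset_iff hQ).1 hm, inv_one]

noncomputable def commChar (m : Fin d → ℤ) : AddChar (Fin d → ℤ) ℂ where
  toFun := commFactor d Q m
  map_zero_eq_one' := commFactor_zero_right m
  map_add_eq_mul' := commFactor_add_right hQ m

lemma commChar_apply (m n : Fin d → ℤ) : commChar hQ m n = commFactor d Q m n := rfl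

lemma commChar_ne_one {m : Fin d → ℤ} (hm : m ∉ Rset d Q) : commChar hQ m ≠ 1 :=
  fun h => hm ((mem_Rset_iff hQ).2 fun n => by rw [← commChar_apply hQ, h, AddChar.one_apply])

lemma add_self_mem_Rset_of_cover {m n : Fin d → ℤ} (hn : n ∉ Rset d Q)
    (hmn : m + n ∉ Rset d Q) (hcover : ∀ z, commFactor d Q m z = 1 ∨ commFactor d Q n z = 1 ∨
      commFactor d Q (m + n) z = 1) :
    m + m ∈ Rset d Q := by
  have hneg : -(m + n) ∉ Rset d Q := fun h => hmn (neg_neg (m + n) ▸ (radical hQ).neg_mem h)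
  have hsq := AddChar.sq_apply_eq_one_of_cover (χ₁ := commChar hQ m) (χ₂ := commChar hQ n)
    (χ₃ := commChar hQ (-(m + n)))
    (fun a => by
      simp only [commChar_apply, ← commFactor_add_left hQ, add_neg_cancel, commFactor_zero_left])
    (commChar_ne_one hQ hn) (commChar_ne_one hQ hneg)
    (fun a => by simpa only [commChar_apply, commFactor_neg_left hQ, inv_eq_one] using hcover a)
  exact (mem_Rset_iff hQ).2 fun w => by rw [commFactor_add_left hQ, ← sq]; exact hsq w

end Bicharacter

section StructureConstants

lemma ip_add (m n : Fin d → ℤ) : ip d γ (m + n) = ip d γ m + ip d γ n := by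
  simp [ip, mul_add, Finset.sum_add_distrib]

lemma ip_ne_zero (hγ : Generic d γ) {m : Fin d → ℤ} (hm : m ≠ 0) : ip d γ m ≠ 0 := by
  refine fun h => hm (funext <| Fintype.linearIndependent_iff.1 (hγ.restrict_scalars' ℤ) m ?_)
  simpa [ip, zsmul_eq_mul, mul_comm] using h

lemma sc_zero_left (n : Fin d → ℤ) : sc d Q γ 0 n = ip d γ n := by
  by_cases hn : n ∈ Rset d Q <;> simp [sc, zero_mem_Rset, hn, qsigma_zero_left]

variable (hQ : QOk d Q)
include hQ

lemma sc_ne_zero_of_mem_of_mem (hγ : Generic d γ) {m n : Fin d → ℤ} (hm : m ∈ Rset d Q)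
    (hn : n ∈ Rset d Q) (hmn : m ≠ n) : sc d Q γ m n ≠ 0 := by
  simpa [sc, hm, hn, qsigma_ne_zero hQ] using ip_ne_zero hγ (sub_ne_zero.2 hmn.symm)

lemma sc_ne_zero_of_mem_of_not_mem (hγ : Generic d γ) {m n : Fin d → ℤ} (hm : m ∈ Rset d Q)
    (hn : n ∉ Rset d Q) : sc d Q γ m n ≠ 0 := by
  simpa [sc, hm, hn, qsigma_ne_zero hQ] using
    ip_ne_zero hγ (fun h : n = 0 => hn (h ▸ zero_mem_Rset))

lemma sc_ne_zero_of_not_mem_of_mem (hγ : Generic d γ) {m n : Fin d → ℤ} (hm : m ∉ Rset d Q)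
    (hn : n ∈ Rset d Q) : sc d Q γ m n ≠ 0 := by
  simpa [sc, hm, hn, qsigma_ne_zero hQ] using
    ip_ne_zero hγ (fun h : m = 0 => hm (h ▸ zero_mem_Rset))

lemma sc_ne_zero_of_commFactor_ne_one {m n : Fin d → ℤ} (h : commFactor d Q m n ≠ 1) :
    sc d Q γ m n ≠ 0 := by
  have hm : m ∉ Rset d Q := fun hm => h ((mem_Rset_iff hQ).1 hm n)
  have hn : n ∉ Rset d Q := fun hn => h (commFactor_eq_one_of_mem_right hQ hn m)
  rw [sc, if_neg hm, if_neg hn, sub_ne_zero]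
  exact fun heq => h (by rw [commFactor, heq, div_self (qsigma_ne_zero hQ n m)])

end StructureConstants

section Bracket

lemma br_L_left_apply (m : Fin d → ℤ) (y : g d) (p : Fin d → ℤ) :
    br d Q γ (L d m) y p = y (p - m) * sc d Q γ m (p - m) := by
  rw [br, L, Finsupp.sum_single_index (by simp), Finsupp.sum_apply,
    Finsupp.sum_eq_single (p - m)]
  · simp
  · intro n _ hn
    rw [Finsupp.single_apply, if_neg fun h => hn (by rw [← h, add_sub_cancel_left])]
  · simp

lemma br_L_right_apply (x : g d) (n p : Fin d → ℤ) :
    br d Q γ x (L d n) p = x (p - n) * sc d Q γ (p - n) n := by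
  simp only [br, L]
  rw [Finsupp.sum_apply, Finsupp.sum_eq_single (p - n)]
  · simp
  · intro m _ hm
    rw [Finsupp.sum_single_index (by simp), Finsupp.single_apply,
      if_neg fun h => hm (by rw [← h, add_sub_cancel_right])]
  · simp

lemma br_L_L (m n : Fin d → ℤ) : br d Q γ (L d m) (L d n) = sc d Q γ m n • L d (m + n) := by
  ext p
  rw [br_L_left_apply, Finsupp.smul_apply, L, L, Finsupp.single_apply, Finsupp.single_apply]
  split_ifs with h₁ h₂ h₂ <;> simp_all [eq_sub_iff_add_eq, add_comm]
  rw [← h₂, add_sub_cancel_left]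

lemma deg_apply (i : Fin d) (y : g d) (p : Fin d → ℤ) : deg d i y p = p i * y p := by
  rw [deg, Finsupp.sum_apply, Finsupp.sum_eq_single p]
  · simp
  · intro m _ hm
    rw [Finsupp.single_eq_of_ne hm.symm]
  · simp

lemma br_L_zero (y : g d) : br d Q γ (L d 0) y = ∑ i, γ i • deg d i y := by
  ext p
  simp only [br_L_left_apply, sub_zero, sc_zero_left, ip, Finsupp.finsetSum_apply,
    Finsupp.smul_apply, deg_apply, smul_eq_mul, Finset.mul_sum]
  exact Finset.sum_congr rfl fun i _ => by ring

variable (Q γ) in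
noncomputable def ad (x : g d) : g d →ₗ[ℂ] g d where
  toFun := br d Q γ x
  map_add' y z := by
    simp only [br]
    rw [← Finsupp.sum_add]
    refine Finsupp.sum_congr fun m _ => Finsupp.sum_add_index' (by simp) fun n b₁ b₂ => ?_
    rw [← Finsupp.single_add]
    ring_nf
  map_smul' c y := by
    simp only [br, RingHom.id_apply, Finsupp.smul_sum]
    refine Finsupp.sum_congr fun m _ => ?_
    rw [Finsupp.sum_smul_index' (by simp)]
    simp only [Finsupp.smul_single, smul_eq_mul]
    ring_nf

lemma ad_apply (x y : g d) : ad Q γ x y = br d Q γ x y := rfl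

variable (d) in
noncomputable def degLM (i : Fin d) : g d →ₗ[ℂ] g d where
  toFun := deg d i
  map_add' y z := by ext p; simp [deg_apply, mul_add]
  map_smul' c y := by ext p; simp [deg_apply]; ring

lemma degLM_apply (i : Fin d) (y : g d) : degLM d i y = deg d i y := rfl

end Bracket

section Additivity

variable (d Q γ) in
def BracketAdditive (φ : (Fin d → ℤ) → ℂ) : Prop :=
  ∀ m n, sc d Q γ m n ≠ 0 → φ (m + n) = φ m + φ n

namespace BracketAdditive

variable {φ : (Fin d → ℤ) → ℂ} (hφ : BracketAdditive d Q γ φ) (hQ : QOk d Q)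
  (hγ : Generic d γ) (hd : 0 < d)
include hφ hγ hd

lemma map_zero : φ 0 = 0 := by
  have : Nonempty (Fin d) := ⟨⟨0, hd⟩⟩
  obtain ⟨n, hn⟩ := exists_ne (0 : Fin d → ℤ)
  simpa using hφ 0 n (by rw [sc_zero_left]; exact ip_ne_zero hγ hn)

include hQ

lemma map_add_self_of_mem {u : Fin d → ℤ} (hu : u ∈ Rset d Q) : φ (u + u) = φ u + φ u := by
  rcases eq_or_ne u 0 with rfl | hu₀
  · simp [hφ.map_zero hγ hd]
  have key : ∀ k l : ℤ, k ≠ l → φ ((k + l) • u) = φ (k • u) + φ (l • u) := fun k l hkl => by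
    rw [add_smul]
    exact hφ _ _ (sc_ne_zero_of_mem_of_mem hQ hγ ((radical hQ).zsmul_mem hu k)
      ((radical hQ).zsmul_mem hu l) ((smul_left_injective ℤ hu₀).ne hkl))
  have h₀ := key 2 (-2) (by norm_num)
  have h₁ := key 4 (-2) (by norm_num)
  have h₂ := key 1 3 (by norm_num)
  have h₃ := key 1 2 (by norm_num)
  norm_num [hφ.map_zero hγ hd] at h₀ h₁ h₂ h₃
  rw [show u + u = 2 * u by ring]
  linear_combination h₁ - h₀ + h₂ + h₃

lemma map_add_of_mem_left {m : Fin d → ℤ} (hm : m ∈ Rset d Q) (n : Fin d → ℤ) :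
    φ (m + n) = φ m + φ n := by
  by_cases hn : n ∈ Rset d Q
  · rcases eq_or_ne m n with rfl | hmn
    · exact hφ.map_add_self_of_mem hQ hγ hd hm
    · exact hφ m n (sc_ne_zero_of_mem_of_mem hQ hγ hm hn hmn)
  · exact hφ m n (sc_ne_zero_of_mem_of_not_mem hQ hγ hm hn)

lemma map_add_self_of_not_mem {m : Fin d → ℤ} (hm : m ∉ Rset d Q) (hmm : m + m ∈ Rset d Q) :
    φ (m + m) = φ m + φ m := by
  obtain ⟨z, hz⟩ : ∃ z, commFactor d Q m z ≠ 1 := by simpa [mem_Rset_iff hQ] using hm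
  have h₁ := hφ m z (sc_ne_zero_of_commFactor_ne_one hQ hz)
  have h₂ := hφ (m + z) m (sc_ne_zero_of_commFactor_ne_one hQ (by
    rwa [commFactor_add_left hQ, commFactor_self hQ, one_mul, commFactor_swap, ne_eq, inv_eq_one]))
  have h₃ := hφ.map_add_of_mem_left hQ hγ hd hmm z
  rw [add_right_comm] at h₂
  linear_combination h₂ - h₃ + h₁

lemma map_add_of_witness {m n z : Fin d → ℤ} (hmn : commFactor d Q m n = 1)
    (hmz : commFactor d Q m z ≠ 1) (hnz : commFactor d Q n z ≠ 1)
    (hmnz : m + n ∈ Rset d Q ∨ commFactor d Q (m + n) z ≠ 1) : φ (m + n) = φ m + φ n := by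
  have h₁ := hφ n z (sc_ne_zero_of_commFactor_ne_one hQ hnz)
  have h₂ := hφ m (n + z) (sc_ne_zero_of_commFactor_ne_one hQ (by
    rwa [commFactor_add_right hQ, hmn, one_mul]))
  have h₃ : φ (m + n + z) = φ (m + n) + φ z := hmnz.elim
    (fun h => hφ.map_add_of_mem_left hQ hγ hd h z)
    (fun h => hφ _ _ (sc_ne_zero_of_commFactor_ne_one hQ h))
  rw [← add_assoc] at h₂
  linear_combination h₂ + h₁ - h₃

lemma map_add_of_commFactor_eq_one {m n : Fin d → ℤ} (hm : m ∉ Rset d Q) (hn : n ∉ Rset d Q)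
    (hmn : commFactor d Q m n = 1) : φ (m + n) = φ m + φ n := by
  by_cases hmnR : m + n ∈ Rset d Q
  · obtain ⟨z, hmz, hnz⟩ := AddChar.exists_apply_ne_one_and_apply_ne_one
      (commChar_ne_one hQ hm) (commChar_ne_one hQ hn)
    exact hφ.map_add_of_witness hQ hγ hd hmn hmz hnz (Or.inl hmnR)
  by_cases hwit : ∃ z, commFactor d Q m z ≠ 1 ∧ commFactor d Q n z ≠ 1 ∧
      commFactor d Q (m + n) z ≠ 1
  · obtain ⟨z, hmz, hnz, hmnz⟩ := hwit
    exact hφ.map_add_of_witness hQ hγ hd hmn hmz hnz (Or.inr hmnz)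
  have hcover : ∀ z, commFactor d Q m z = 1 ∨ commFactor d Q n z = 1 ∨
      commFactor d Q (m + n) z = 1 := fun z => by
    by_cases h₁ : commFactor d Q m z = 1
    · exact Or.inl h₁
    by_cases h₂ : commFactor d Q n z = 1
    · exact Or.inr (Or.inl h₂)
    exact Or.inr (Or.inr (not_not.1 fun h₃ => hwit ⟨z, h₁, h₂, h₃⟩))
  have hmm := add_self_mem_Rset_of_cover hQ hn hmnR hcover
  have hnn := add_self_mem_Rset_of_cover hQ hm (by rwa [add_comm]) fun z => by
    rw [add_comm]
    rcases hcover z with h | h | h <;> simp only [h, true_or, or_true]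
  have h2mn : m + n + (m + n) ∈ Rset d Q := by
    rw [add_add_add_comm]; exact (radical hQ).add_mem hmm hnn
  have h := calc
    φ (m + n) + φ (m + n) = φ (m + n + (m + n)) :=
      (hφ.map_add_self_of_not_mem hQ hγ hd hmnR h2mn).symm
    _ = φ (m + m + (n + n)) := by rw [add_add_add_comm]
    _ = φ m + φ m + (φ n + φ n) := by
      rw [hφ.map_add_of_mem_left hQ hγ hd hmm, hφ.map_add_self_of_not_mem hQ hγ hd hm hmm,
        hφ.map_add_self_of_not_mem hQ hγ hd hn hnn]
  linear_combination h / 2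

theorem map_add (m n : Fin d → ℤ) : φ (m + n) = φ m + φ n := by
  by_cases hm : m ∈ Rset d Q
  · exact hφ.map_add_of_mem_left hQ hγ hd hm n
  by_cases hn : n ∈ Rset d Q
  · exact hφ m n (sc_ne_zero_of_not_mem_of_mem hQ hγ hm hn)
  by_cases hmn : commFactor d Q m n = 1
  · exact hφ.map_add_of_commFactor_eq_one hQ hγ hd hm hn hmn
  · exact hφ m n (sc_ne_zero_of_commFactor_ne_one hQ hmn)

theorem exists_eq_sum : ∃ c : Fin d → ℂ, ∀ n, φ n = ∑ i, c i * n i := by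
  let f := (AddMonoidHom.mk' φ (hφ.map_add hQ hγ hd)).toIntLinearMap
  exact ⟨fun i => φ fun j => if i = j then 1 else 0, fun n =>
    (f.pi_apply_eq_sum_univ n).trans (by simp [f, zsmul_eq_mul, mul_comm])⟩

end BracketAdditive

end Additivity

section Derivation

variable {D : g d →ₗ[ℂ] g d}

variable (γ) in
/-- `x_r = -(D L_0)_r / (γ|r)`; at `r = 0` division by `(γ|0) = 0` makes the coefficient `0`. -/
noncomputable def innerPart (D : g d →ₗ[ℂ] g d) : g d :=
  Finsupp.onFinset (D (L d 0)).support (fun r => -(D (L d 0) r / ip d γ r)) fun r hr =>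
    Finsupp.mem_support_iff.2 fun h => hr (by simp [h])

lemma innerPart_apply (r : Fin d → ℤ) : innerPart γ D r = -(D (L d 0) r / ip d γ r) := rfl

namespace IsDer

variable (hD : IsDer d Q γ D)
include hD

lemma apply_L_apply_of_ne (hγ : Generic d γ) {n p : Fin d → ℤ} (hpn : p ≠ n) :
    D (L d n) p = innerPart γ D (p - n) * sc d Q γ (p - n) n := by
  have h := DFunLike.congr_fun (hD (L d 0) (L d n)) p
  simp only [br_L_L, zero_add, map_smul, Finsupp.smul_apply, smul_eq_mul, Finsupp.add_apply,
    br_L_right_apply, br_L_left_apply, sub_zero, sc_zero_left] at h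
  have hip : ip d γ p = ip d γ (p - n) + ip d γ n := by rw [← ip_add, sub_add_cancel]
  have hne : ip d γ (p - n) ≠ 0 := ip_ne_zero hγ (sub_ne_zero.2 hpn)
  rw [innerPart_apply]
  field_simp
  linear_combination -h - D (L d n) p * hip

lemma bracketAdditive_apply_L_self : BracketAdditive d Q γ fun n => D (L d n) n := by
  intro m n hmn
  have h := DFunLike.congr_fun (hD (L d m) (L d n)) (m + n)
  simp only [br_L_L, map_smul, Finsupp.smul_apply, smul_eq_mul, Finsupp.add_apply,
    br_L_right_apply, br_L_left_apply, add_sub_cancel_right, add_sub_cancel_left] at h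
  exact mul_left_cancel₀ hmn (by linear_combination h)

lemma apply_L_eq (hγ : Generic d γ) {c : Fin d → ℂ} (hc : ∀ n, D (L d n) n = ∑ i, c i * n i)
    (n : Fin d → ℤ) :
    D (L d n) = br d Q γ (innerPart γ D) (L d n) + ∑ i, c i • deg d i (L d n) := by
  ext p
  simp only [Finsupp.add_apply, br_L_right_apply, Finsupp.finsetSum_apply, Finsupp.smul_apply,
    deg_apply, smul_eq_mul]
  rcases eq_or_ne p n with rfl | hpn
  · rw [hc, sub_self, innerPart_apply]
    simp [L, ip]
  · rw [hD.apply_L_apply_of_ne hγ hpn]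
    simp [L, Finsupp.single_eq_of_ne hpn]

end IsDer

end Derivation

end QTorus

open QTorus

/-- every derivation D of g(γ,Q) is of the form ad x + ∑ c_i ∂_i
for some x ∈ g and scalars c_i, and ad L_0 = γ_1∂_1 + ⋯ + γ_d∂_d. -/
theorem stmt9 (d : ℕ) (hd : 1 < d) (Q : Matrix (Fin d) (Fin d) ℂ) (hQ : QOk d Q)
    (γ : Fin d → ℂ) (hγ : Generic d γ)
    (D : g d →ₗ[ℂ] g d) (hD : IsDer d Q γ D) :
    (∃ (x : g d) (c : Fin d → ℂ),
      ∀ y : g d, D y = br d Q γ x y + ∑ i : Fin d, c i • deg d i y) ∧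
    (∀ y : g d, br d Q γ (L d 0) y = ∑ i : Fin d, γ i • deg d i y) := by
  obtain ⟨c, hc⟩ := hD.bracketAdditive_apply_L_self.exists_eq_sum hQ hγ (by omega)
  have hDL : D = ad Q γ (innerPart γ D) + ∑ i, c i • degLM d i :=
    Finsupp.lhom_ext' fun n => LinearMap.ext_ring <| by
      simpa [ad_apply, degLM_apply, L] using hD.apply_L_eq hγ hc n
  refine ⟨⟨innerPart γ D, c, fun y => ?_⟩, br_L_zero⟩
  simpa [ad_apply, degLM_apply] using LinearMap.congr_fun hDL y
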